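/- arXiv:1508.01759 — 2 statements merged into one kernel-verified Lean document; each statement's English description precedes it below -/
import Mathlib

section
/- Let G be a connected triangle-free graph on n ≥ 2 vertices with chromatic number k ≥ 2, and let H = G ⊠ K₂ be the graph on vertex set V(G) × {0,1} in which (u,i) and (v,j) are adjacent if and only if (u = v and i ≠ j) or u and v are adjacent in G. Then the K₃-WORM feasible set of H is exactly {2} ∪ {s : k ≤ s ≤ n}; that is, H has a K₃-WORM coloring with exactly s colors if and only if s = 2 or k ≤ s ≤ n. -/
open SimpleGraph

/-- A K₃-WORM coloring of `G`: every triangle receives exactly two colors. -/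
def IsWormColoring {V : Type*} (G : SimpleGraph V) (c : V → ℕ) : Prop :=
  ∀ u v w : V, G.Adj u v → G.Adj u w → G.Adj v w → ({c u, c v, c w} : Finset ℕ).card = 2

/-- The number of colors used by a coloring of a finite vertex set. -/
def colorsUsed {V : Type*} [Fintype V] (c : V → ℕ) : ℕ := (Finset.univ.image c).card

/-- The K₃-WORM feasible set of `G`: the set of `s` such that `G` has a
K₃-WORM coloring using exactly `s` colors. -/
def wormFeasible {V : Type*} [Fintype V] (G : SimpleGraph V) : Set ℕ :=
  {s | ∃ c : V → ℕ, IsWormColoring G c ∧ colorsUsed c = s}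

/-- `G` is triangle-free: it has no three pairwise adjacent vertices. -/
def TriangleFree {V : Type*} (G : SimpleGraph V) : Prop :=
  ∀ u v w : V, G.Adj u v → G.Adj u w → G.Adj v w → False

/-- The strong product `G ⊠ K₂`, on vertex set `V × Bool`:
`(u,i)` and `(v,j)` are adjacent iff (`u = v` and `i ≠ j`) or `u`,`v` are adjacent in `G`. -/
def strongProdK2 {V : Type*} (G : SimpleGraph V) : SimpleGraph (V × Bool) :=
  SimpleGraph.fromRel (fun p q => (p.1 = q.1 ∧ p.2 ≠ q.2) ∨ G.Adj p.1 q.1)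

/-! If `G` is triangle-free, every triangle of `G ⊠ K₂` is a fiber `{(u,0), (u,1)}` plus a
vertex over a neighbour of `u`. So coloring by the `K₂`-coordinate, or lifting a proper coloring
of `G`, is a K₃-WORM coloring, and `G` has proper colorings with any number of colors from `χ(G)`
to `n`.
Conversely, in a K₃-WORM coloring a monochromatic fiber forbids its color on the neighbouring
fibers, so if all fibers are monochromatic the coloring lifts a proper coloring of `G`; and a
bichromatic fiber forces each neighbouring fiber to carry the same two colors, so by connectivity
exactly two colors occur. -/

open Finset

lemma card_triple_eq_two_iff {α : Type*} [DecidableEq α] {a b c : α} :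
    ({a, b, c} : Finset α).card = 2 ↔ (a = b ∨ a = c ∨ b = c) ∧ ¬(a = b ∧ b = c) := by
  by_cases hab : a = b <;> by_cases hac : a = c <;> by_cases hbc : b = c <;>
    simp_all [card_insert_of_notMem]

lemma SimpleGraph.Reachable.of_adj_imp {V : Type*} {G : SimpleGraph V} {Q : V → Prop}
    (hQ : ∀ ⦃x y⦄, G.Adj x y → Q x → Q y) {u v : V} (h : G.Reachable u v) (hu : Q u) :
    Q v := by
  obtain ⟨w⟩ := h
  induction w with
  | nil => exact hu
  | cons hadj _ ih => exact ih (hQ hadj hu)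

section Coloring

variable {V : Type*} [Fintype V] {G : SimpleGraph V}

lemma colorsUsed_le_card (c : V → ℕ) : colorsUsed c ≤ Fintype.card V :=
  card_image_le

lemma chromaticNumber_le_colorsUsed (C : G.Coloring ℕ) : G.chromaticNumber ≤ colorsUsed C := by
  let C' : G.Coloring (univ.image C) :=
    Coloring.mk (fun v => ⟨C v, mem_image_of_mem C (mem_univ v)⟩)
      fun h heq => C.valid h (congrArg Subtype.val heq)
  simpa [colorsUsed] using C'.colorable.chromaticNumber_le

lemma exists_coloring_colorsUsed_succ (C : G.Coloring ℕ) (h : colorsUsed C < Fintype.card V) :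
    ∃ C' : G.Coloring ℕ, colorsUsed C' = colorsUsed C + 1 := by
  classical
  obtain ⟨u, -, v, -, huv, hCuv⟩ := exists_ne_map_eq_of_card_image_lt (s := univ) (f := C) h
  obtain ⟨m, hm⟩ := Infinite.exists_notMem_finset (univ.image C)
  have hCm : ∀ x, C x ≠ m := fun x hx => hm (hx ▸ mem_image_of_mem C (mem_univ x))
  -- recolor `u` with a fresh color; its old color survives at `v`
  let C' : G.Coloring ℕ := Coloring.mk (Function.update C u m) fun {a b} hab => by
    by_cases ha : a = u <;> by_cases hb : b = u
    · exact absurd (ha.trans hb.symm) hab.ne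
    · subst ha; simpa [hb] using (hCm b).symm
    · subst hb; simpa [ha] using hCm a
    · simpa [ha, hb] using C.valid hab
  have himage : univ.image C' = insert m (univ.image C) := by
    ext x
    simp only [C', Coloring.mk, RelHom.coeFn_mk, mem_image, mem_univ, true_and, mem_insert]
    constructor
    · rintro ⟨a, rfl⟩
      by_cases ha : a = u <;> simp [ha]
    · rintro (rfl | ⟨a, rfl⟩)
      · exact ⟨u, by simp⟩
      · rcases eq_or_ne a u with rfl | ha
        · exact ⟨v, by simp [huv.symm, hCuv]⟩
        · exact ⟨a, by simp [ha]⟩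
  exact ⟨C', by rw [colorsUsed, himage, card_insert_of_notMem hm]; rfl⟩

lemma exists_coloring_colorsUsed_eq_of_le (C : G.Coloring ℕ) {s : ℕ} (hC : colorsUsed C ≤ s)
    (hs : s ≤ Fintype.card V) : ∃ C' : G.Coloring ℕ, colorsUsed C' = s := by
  induction s, hC using Nat.le_induction with
  | base => exact ⟨C, rfl⟩
  | succ s _ ih =>
    obtain ⟨C', hC'⟩ := ih (by omega)
    obtain ⟨C'', hC''⟩ := exists_coloring_colorsUsed_succ C' (by omega)
    exact ⟨C'', by omega⟩

lemma exists_coloring_colorsUsed_eq {s : ℕ} (hχ : G.chromaticNumber ≤ s)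
    (hs : s ≤ Fintype.card V) : ∃ C : G.Coloring ℕ, colorsUsed C = s := by
  obtain ⟨C⟩ := chromaticNumber_le_iff_colorable.1 hχ
  refine exists_coloring_colorsUsed_eq_of_le (G.recolorOfEmbedding Fin.valEmbedding C) ?_ hs
  calc colorsUsed (G.recolorOfEmbedding Fin.valEmbedding C)
      ≤ (range s).card := card_le_card fun x hx => by
        obtain ⟨v, -, rfl⟩ := mem_image.1 hx
        exact mem_range.2 (C v).isLt
    _ = s := card_range s

end Coloring

section StrongProdK2

variable {V : Type*} {G : SimpleGraph V}

@[simp]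
lemma strongProdK2_adj {p q : V × Bool} :
    (strongProdK2 G).Adj p q ↔ (p.1 = q.1 ∧ p.2 ≠ q.2) ∨ G.Adj p.1 q.1 := by
  refine ⟨fun h => ?_, fun h => ⟨?_, .inl h⟩⟩
  · rcases h.2 with h | ⟨he, hne⟩ | h
    · exact h
    · exact .inl ⟨he.symm, hne.symm⟩
    · exact .inr h.symm
  · rintro rfl
    rcases h with ⟨-, h⟩ | h
    exacts [h rfl, G.loopless.irrefl _ h]

lemma strongProdK2.snd_ne_of_adj {p q : V × Bool} (h : (strongProdK2 G).Adj p q)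
    (he : p.1 = q.1) : p.2 ≠ q.2 := by
  rcases strongProdK2_adj.1 h with ⟨-, hne⟩ | hadj
  exacts [hne, (G.loopless.irrefl _ (he ▸ hadj)).elim]

lemma strongProdK2.adj_fst_of_adj {p q : V × Bool} (h : (strongProdK2 G).Adj p q)
    (hne : p.1 ≠ q.1) : G.Adj p.1 q.1 :=
  (strongProdK2_adj.1 h).resolve_left fun h' => hne h'.1

lemma strongProdK2.fst_eq_of_triangle (htf : TriangleFree G) {p q r : V × Bool}
    (hpq : (strongProdK2 G).Adj p q) (hpr : (strongProdK2 G).Adj p r)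
    (hqr : (strongProdK2 G).Adj q r) : p.1 = q.1 ∨ p.1 = r.1 ∨ q.1 = r.1 := by
  by_contra! h
  exact htf _ _ _ (adj_fst_of_adj hpq h.1) (adj_fst_of_adj hpr h.2.1) (adj_fst_of_adj hqr h.2.2)

lemma strongProdK2.not_fst_eq_of_triangle {p q r : V × Bool}
    (hpq : (strongProdK2 G).Adj p q) (hpr : (strongProdK2 G).Adj p r)
    (hqr : (strongProdK2 G).Adj q r) : ¬(p.1 = q.1 ∧ q.1 = r.1) := by
  rintro ⟨h₁, h₂⟩
  have hpq := snd_ne_of_adj hpq h₁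
  have hpr := snd_ne_of_adj hpr (h₁.trans h₂)
  have hqr := snd_ne_of_adj hqr h₂
  revert hpq hpr hqr
  cases p.2 <;> cases q.2 <;> cases r.2 <;> decide

lemma isWormColoring_snd (htf : TriangleFree G) :
    IsWormColoring (strongProdK2 G) fun p => p.2.toNat := by
  rintro ⟨u, i⟩ ⟨v, j⟩ ⟨w, l⟩ hpq hpr hqr
  have hdiff : i ≠ j ∨ i ≠ l ∨ j ≠ l := by
    rcases strongProdK2.fst_eq_of_triangle htf hpq hpr hqr with h | h | h
    exacts [.inl (strongProdK2.snd_ne_of_adj hpq h), .inr (.inl (strongProdK2.snd_ne_of_adj hpr h)),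
      .inr (.inr (strongProdK2.snd_ne_of_adj hqr h))]
  rw [card_triple_eq_two_iff]
  revert hdiff
  cases i <;> cases j <;> cases l <;> simp

lemma isWormColoring_coloring_fst (htf : TriangleFree G) (C : G.Coloring ℕ) :
    IsWormColoring (strongProdK2 G) fun p => C p.1 := by
  intro p q r hpq hpr hqr
  rw [card_triple_eq_two_iff]
  refine ⟨?_, ?_⟩
  · rcases strongProdK2.fst_eq_of_triangle htf hpq hpr hqr with h | h | h <;> simp [h]
  · rintro ⟨e₁, e₂⟩
    by_cases h : p.1 = q.1
    · have hne : q.1 ≠ r.1 := fun h' =>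
        strongProdK2.not_fst_eq_of_triangle hpq hpr hqr ⟨h, h'⟩
      exact C.valid (strongProdK2.adj_fst_of_adj hqr hne) e₂
    · exact C.valid (strongProdK2.adj_fst_of_adj hpq h) e₁

end StrongProdK2

section ColorsUsed

variable {V : Type*} [Fintype V]

lemma colorsUsed_comp_fst (f : V → ℕ) :
    colorsUsed (fun p : V × Bool => f p.1) = colorsUsed f := by
  simp only [colorsUsed]
  congr 1
  ext x
  simp

lemma colorsUsed_snd [Nonempty V] : colorsUsed (fun p : V × Bool => p.2.toNat) = 2 := by
  obtain ⟨v⟩ := ‹Nonempty V›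
  have himage : univ.image (fun p : V × Bool => p.2.toNat) = {0, 1} := by
    ext x
    simp only [mem_image, mem_univ, true_and, Prod.exists, exists_const, mem_insert, mem_singleton]
    constructor
    · rintro ⟨i, rfl⟩
      cases i <;> simp
    · rintro (rfl | rfl)
      exacts [⟨false, rfl⟩, ⟨true, rfl⟩]
  rw [colorsUsed, himage]
  rfl

end ColorsUsed

def fiberColors {V : Type*} (c : V × Bool → ℕ) (u : V) : Finset ℕ :=
  {c (u, false), c (u, true)}

namespace IsWormColoring

variable {V : Type*} {G : SimpleGraph V} {c : V × Bool → ℕ}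

lemma card_fiber_triangle (hw : IsWormColoring (strongProdK2 G) c) {u v : V} (h : G.Adj u v)
    (i : Bool) : ({c (u, false), c (u, true), c (v, i)} : Finset ℕ).card = 2 :=
  hw _ _ _ (by simp) (by simp [h]) (by simp [h])

lemma ne_of_adj_of_fiber_eq (hw : IsWormColoring (strongProdK2 G) c) {u v : V} (h : G.Adj u v)
    (hu : c (u, false) = c (u, true)) (i : Bool) : c (v, i) ≠ c (u, false) := by
  have := hw.card_fiber_triangle h i
  rw [← hu, card_triple_eq_two_iff] at this
  exact fun he => this.2 ⟨rfl, he.symm⟩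

lemma mem_fiberColors_of_adj (hw : IsWormColoring (strongProdK2 G) c) {u v : V} (h : G.Adj u v)
    (hu : c (u, false) ≠ c (u, true)) (i : Bool) : c (v, i) ∈ fiberColors c u := by
  have := hw.card_fiber_triangle h i
  rw [card_triple_eq_two_iff] at this
  simp only [fiberColors, mem_insert, mem_singleton]
  tauto

lemma fiberColors_eq_of_adj (hw : IsWormColoring (strongProdK2 G) c) {u v : V} (h : G.Adj u v)
    (hu : (fiberColors c u).card = 2) : fiberColors c v = fiberColors c u := by
  have hu' : c (u, false) ≠ c (u, true) := fun he => by simp [fiberColors, he] at hu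
  have hv : c (v, false) ≠ c (v, true) := fun hv => by
    rcases mem_insert.1 (hw.mem_fiberColors_of_adj h hu' false) with he | he
    · exact hw.ne_of_adj_of_fiber_eq h.symm hv false he.symm
    · exact hw.ne_of_adj_of_fiber_eq h.symm hv true (mem_singleton.1 he).symm
  refine eq_of_subset_of_card_le ?_ ?_
  · intro x hx
    simp only [fiberColors, mem_insert, mem_singleton] at hx
    rcases hx with rfl | rfl <;> exact hw.mem_fiberColors_of_adj h hu' _
  · rw [hu, fiberColors, card_pair hv]

lemma exists_coloring_of_fiber_eq (hw : IsWormColoring (strongProdK2 G) c)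
    (hmono : ∀ u, c (u, false) = c (u, true)) : ∃ C : G.Coloring ℕ, c = fun p => C p.1 := by
  refine ⟨Coloring.mk (fun u => c (u, false))
    fun h => (hw.ne_of_adj_of_fiber_eq h (hmono _) false).symm, ?_⟩
  funext ⟨u, i⟩
  cases i
  exacts [rfl, (hmono u).symm]

lemma colorsUsed_eq_two [Fintype V] (hw : IsWormColoring (strongProdK2 G) c)
    (hconn : G.Connected) {u : V} (hu : c (u, false) ≠ c (u, true)) : colorsUsed c = 2 := by
  have hcard : (fiberColors c u).card = 2 := card_pair hu
  have hall : ∀ v, fiberColors c v = fiberColors c u := fun v =>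
    (hconn u v).of_adj_imp (Q := fun v => fiberColors c v = fiberColors c u)
      (fun _ _ hxy hx => (hw.fiberColors_eq_of_adj hxy (hx ▸ hcard)).trans hx) rfl
  have himage : univ.image c = fiberColors c u := by
    ext x
    simp only [mem_image, mem_univ, true_and, Prod.exists]
    constructor
    · rintro ⟨v, i, rfl⟩
      rw [← hall v]
      cases i <;> simp [fiberColors]
    · intro hx
      simp only [fiberColors, mem_insert, mem_singleton] at hx
      rcases hx with rfl | rfl
      exacts [⟨u, false, rfl⟩, ⟨u, true, rfl⟩]
  rw [colorsUsed, himage, hcard]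

end IsWormColoring

theorem strongProdK2_wormFeasible_eq_general {V : Type*} [Fintype V]
    (G : SimpleGraph V) (k : ℕ)
    (hconn : G.Connected) (htf : TriangleFree G)
    (hchi : G.chromaticNumber = (k : ℕ∞)) :
    ∀ s : ℕ, s ∈ wormFeasible (strongProdK2 G) ↔
      (s = 2 ∨ (k ≤ s ∧ s ≤ Fintype.card V)) := by
  intro s
  constructor
  · rintro ⟨c, hw, rfl⟩
    by_cases hmono : ∀ u, c (u, false) = c (u, true)
    · obtain ⟨C, rfl⟩ := hw.exists_coloring_of_fiber_eq hmono
      rw [colorsUsed_comp_fst]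
      have hχ := chromaticNumber_le_colorsUsed C
      rw [hchi] at hχ
      exact .inr ⟨mod_cast hχ, colorsUsed_le_card C⟩
    · obtain ⟨u, hu⟩ := not_forall.1 hmono
      exact .inl (hw.colorsUsed_eq_two hconn hu)
  · rintro (rfl | ⟨hks, hsn⟩)
    · have := hconn.nonempty
      exact ⟨_, isWormColoring_snd htf, colorsUsed_snd⟩
    · obtain ⟨C, hC⟩ := exists_coloring_colorsUsed_eq (by rw [hchi]; exact_mod_cast hks) hsn
      exact ⟨_, isWormColoring_coloring_fst htf C, (colorsUsed_comp_fst C).trans hC⟩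

/-- If `G` is a connected triangle-free graph on `n ≥ 2` vertices with chromatic
number `k ≥ 2`, then the K₃-WORM feasible set of `H = G ⊠ K₂` is exactly
`{2} ∪ {s : k ≤ s ≤ n}`. -/
theorem strongProdK2_wormFeasible_eq {V : Type*} [Fintype V]
    (G : SimpleGraph V) (k : ℕ) (hk : 2 ≤ k) (hn : 2 ≤ Fintype.card V)
    (hconn : G.Connected) (htf : TriangleFree G)
    (hchi : G.chromaticNumber = (k : ℕ∞)) :
    ∀ s : ℕ, s ∈ wormFeasible (strongProdK2 G) ↔
      (s = 2 ∨ (k ≤ s ∧ s ≤ Fintype.card V)) :=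
  strongProdK2_wormFeasible_eq_general G k hconn htf hchi
end

section
/- Let G be a finite graph on n vertices with maximum degree at most 3, and let G^Δ be the spanning subgraph of G whose edges are exactly those edges of G contained in at least one triangle of G. Then every connected component of G^Δ is isomorphic to K₁, K₃, K₄ − e, or K₄, and W^+(G) = n − n₃ − n₄₋ₑ − 2·n₄, where n₃, n₄₋ₑ, and n₄ denote the numbers of connected components of G^Δ isomorphic to K₃, to K₄ − e, and to K₄, respectively. -/
open SimpleGraph

/-- `G^Δ`: the spanning subgraph of `G` whose edges are exactly the edges of `G`
contained in at least one triangle of `G`. -/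
def triangleEdgeSubgraph {V : Type*} (G : SimpleGraph V) : SimpleGraph V where
  Adj u v := G.Adj u v ∧ ∃ w : V, G.Adj u w ∧ G.Adj v w
  symm := by
    constructor
    rintro u v ⟨h, w, h1, h2⟩
    exact ⟨h.symm, w, h2, h1⟩
  loopless := by
    constructor
    rintro v ⟨h, -⟩
    exact G.loopless.irrefl v h

/-- `K₄ − e`: the complete graph on four vertices with one edge removed. -/
def K4minusE : SimpleGraph (Fin 4) := (⊤ : SimpleGraph (Fin 4)).deleteEdges {s(2, 3)}

/-- The number of connected components of `H` whose induced subgraph is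
isomorphic to `K`. -/
noncomputable def compCount {V β : Type*} (H : SimpleGraph V) (K : SimpleGraph β) : ℕ :=
  Nat.card {C : H.ConnectedComponent // Nonempty (H.induce C.supp ≃g K)}

/-!
In a graph of maximum degree 3, two triangles through a common vertex share an edge, so a
component of `G^Δ` is a single vertex, a triangle, or two triangles glued along an edge; the
degree bound then closes the latter off as `K₄ − e` or `K₄`. Every triangle of `G` lies in one
component of `G^Δ`, so K₃-WORM colourings can be chosen independently on the components with
disjoint palettes, and `W⁺(G)` is the sum of `W⁺` of the components, namely `1, 2, 3, 2` for
`K₁, K₃, K₄ − e, K₄`. Hence `n − W⁺(G) = n₃ + n₄₋ₑ + 2·n₄`.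
-/

section WormColoring

variable {V W : Type*}

theorem IsWormColoring.comp_hom {G : SimpleGraph V} {G' : SimpleGraph W} {c : W → ℕ}
    (hc : IsWormColoring G' c) (f : G →g G') : IsWormColoring G (c ∘ f) :=
  fun _ _ _ huv huw hvw => hc _ _ _ (f.map_adj huv) (f.map_adj huw) (f.map_adj hvw)

theorem colorsUsed_comp_equiv [Fintype V] [Fintype W] (c : W → ℕ) (e : V ≃ W) :
    colorsUsed (c ∘ e) = colorsUsed c := by
  classical
  unfold colorsUsed
  rw [← Finset.image_image, Finset.image_univ_equiv]

theorem wormFeasible_eq_of_iso [Fintype V] [Fintype W] {G : SimpleGraph V} {G' : SimpleGraph W}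
    (e : G ≃g G') : wormFeasible G = wormFeasible G' := by
  ext s
  constructor
  · rintro ⟨c, hc, rfl⟩
    refine ⟨c ∘ e.symm, hc.comp_hom e.symm.toHom, ?_⟩
    exact colorsUsed_comp_equiv c e.symm.toEquiv
  · rintro ⟨c, hc, rfl⟩
    exact ⟨c ∘ e, hc.comp_hom e.toHom, colorsUsed_comp_equiv c e.toEquiv⟩

theorem isWormColoring_triangleEdgeSubgraph_iff {G : SimpleGraph V} {c : V → ℕ} :
    IsWormColoring (triangleEdgeSubgraph G) c ↔ IsWormColoring G c :=
  ⟨fun hc u v w huv huw hvw => hc u v w ⟨huv, w, huw, hvw⟩ ⟨huw, v, huv, hvw.symm⟩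
      ⟨hvw, u, huv.symm, huw.symm⟩,
    fun hc u v w huv huw hvw => hc u v w huv.1 huw.1 hvw.1⟩

theorem wormFeasible_triangleEdgeSubgraph [Fintype V] (G : SimpleGraph V) :
    wormFeasible (triangleEdgeSubgraph G) = wormFeasible G := by
  simp only [wormFeasible, isWormColoring_triangleEdgeSubgraph_iff]

end WormColoring

section Components

variable {V : Type*} [Fintype V] [DecidableEq V] {H : SimpleGraph V} [DecidableRel H.Adj]

theorem colorsUsed_le_sum_components (c : V → ℕ) :
    colorsUsed c ≤ ∑ C : H.ConnectedComponent, colorsUsed (c ∘ Subtype.val : C.supp → ℕ) := by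
  unfold colorsUsed
  calc (Finset.univ.image c).card
      ≤ (Finset.univ.biUnion fun C : H.ConnectedComponent =>
          (Finset.univ : Finset C.supp).image (c ∘ Subtype.val)).card := by
        refine Finset.card_le_card fun k hk => ?_
        obtain ⟨v, -, rfl⟩ := Finset.mem_image.mp hk
        exact Finset.mem_biUnion.mpr ⟨H.connectedComponentMk v, Finset.mem_univ _,
          Finset.mem_image.mpr ⟨⟨v, rfl⟩, Finset.mem_univ _, rfl⟩⟩
    _ ≤ _ := Finset.card_biUnion_le

theorem sum_natCard_supp : ∑ C : H.ConnectedComponent, Nat.card C.supp = Fintype.card V := by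
  rw [← Nat.card_eq_fintype_card, ← Nat.card_congr (Equiv.sigmaFiberEquiv H.connectedComponentMk),
    Nat.card_sigma]
  rfl

theorem exists_isWormColoring_colorsUsed_eq_sum (f : ∀ C : H.ConnectedComponent, C.supp → ℕ)
    (hf : ∀ C, IsWormColoring (H.induce C.supp) (f C)) :
    ∃ c : V → ℕ, IsWormColoring H c ∧ colorsUsed c = ∑ C, colorsUsed (f C) := by
  set e := Fintype.equivFin H.ConnectedComponent
  set paint : (Σ _ : H.ConnectedComponent, ℕ) → ℕ := fun p => Nat.pair (e p.1) p.2
  have paint_inj : Function.Injective paint := by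
    rintro ⟨C, k⟩ ⟨D, l⟩ h
    obtain ⟨hCD, rfl⟩ := Nat.pair_eq_pair.mp h
    obtain rfl := e.injective (Fin.ext hCD)
    rfl
  let c : V → ℕ := fun v => paint ⟨H.connectedComponentMk v, f _ ⟨v, rfl⟩⟩
  have c_apply {C : H.ConnectedComponent} {v : V} (hv : v ∈ C.supp) :
      c v = paint ⟨C, f C ⟨v, hv⟩⟩ := by
    subst hv; rfl
  refine ⟨c, fun u v w huv huw hvw => ?_, ?_⟩
  · set C := H.connectedComponentMk u
    have hv : v ∈ C.supp := (ConnectedComponent.connectedComponentMk_eq_of_adj huv).symm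
    have hw : w ∈ C.supp := (ConnectedComponent.connectedComponentMk_eq_of_adj huw).symm
    rw [c_apply (rfl : u ∈ C.supp), c_apply hv, c_apply hw,
      ← hf C ⟨u, rfl⟩ ⟨v, hv⟩ ⟨w, hw⟩ huv huw hvw]
    simpa only [Finset.image_insert, Finset.image_singleton, Function.comp_apply] using
      Finset.card_image_of_injective {f C ⟨u, rfl⟩, f C ⟨v, hv⟩, f C ⟨w, hw⟩}
        (paint_inj.comp (sigma_mk_injective (i := C)))
  · have himage : Finset.univ.image c =
        (Finset.univ.sigma fun C => Finset.univ.image (f C)).image paint := by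
      ext k
      simp only [Finset.mem_image, Finset.mem_univ, true_and, Finset.mem_sigma, Sigma.exists]
      constructor
      · rintro ⟨v, rfl⟩
        exact ⟨_, _, ⟨_, rfl⟩, rfl⟩
      · rintro ⟨C, _, ⟨⟨v, hv⟩, rfl⟩, rfl⟩
        exact ⟨v, c_apply hv⟩
    rw [colorsUsed, himage, Finset.card_image_of_injective _ paint_inj, Finset.card_sigma]
    rfl

theorem isGreatest_wormFeasible_of_components (w : H.ConnectedComponent → ℕ)
    (hw : ∀ C, IsGreatest (wormFeasible (H.induce C.supp)) (w C)) :
    IsGreatest (wormFeasible H) (∑ C, w C) := by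
  constructor
  · choose f hf hfw using fun C => (hw C).1
    obtain ⟨c, hc, hcount⟩ := exists_isWormColoring_colorsUsed_eq_sum f hf
    exact ⟨c, hc, hcount.trans (Finset.sum_congr rfl fun C _ => hfw C)⟩
  · rintro _ ⟨c, hc, rfl⟩
    exact (colorsUsed_le_sum_components c).trans (Finset.sum_le_sum fun C _ =>
      (hw C).2 ⟨_, hc.comp_hom (Embedding.induce C.supp).toHom, rfl⟩)

end Components

section Models

theorem Finset.eq_of_card_triple_eq_two {α : Type*} [DecidableEq α] {a b d : α}
    (h : ({a, b, d} : Finset α).card = 2) (hda : d ≠ a) (hdb : d ≠ b) : a = b := by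
  by_contra hab
  rw [Finset.card_insert_of_notMem (by simp [hab, hda.symm]), Finset.card_pair hdb.symm] at h
  omega

variable {V : Type*} {G : SimpleGraph V} {c : V → ℕ}

theorem IsWormColoring.mem_of_adj_triangle (hc : IsWormColoring G c) {u v w x : V}
    (huv : G.Adj u v) (huw : G.Adj u w) (hvw : G.Adj v w)
    (hux : G.Adj u x) (hvx : G.Adj v x) (hwx : G.Adj w x) : c x ∈ ({c u, c v, c w} : Finset ℕ) := by
  by_contra hx
  simp only [Finset.mem_insert, Finset.mem_singleton, not_or] at hx
  obtain ⟨hxu, hxv, hxw⟩ := hx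
  have huv' := Finset.eq_of_card_triple_eq_two (hc u v x huv hux hvx) hxu hxv
  have huw' := Finset.eq_of_card_triple_eq_two (hc u w x huw hux hwx) hxu hxw
  have := hc u v w huv huw hvw
  rw [← huv', ← huw'] at this
  simp at this

theorem image_univ_fin_three {α : Type*} [DecidableEq α] (c : Fin 3 → α) :
    Finset.univ.image c = {c 0, c 1, c 2} := by
  simp [Fin.univ_image_def, List.ofFn_succ]

theorem image_univ_fin_four {α : Type*} [DecidableEq α] (c : Fin 4 → α) :
    Finset.univ.image c = insert (c 3) {c 0, c 1, c 2} := by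
  ext
  simp only [Finset.mem_image, Finset.mem_univ, true_and, Fin.exists_fin_succ, Fin.isValue,
    Fin.succ_zero_eq_one, Fin.succ_one_eq_two, Fin.reduceSucc, IsEmpty.exists_iff, or_false,
    Finset.mem_insert, Finset.mem_singleton]
  tauto

theorem K4minusE_adj {i j : Fin 4} : K4minusE.Adj i j ↔ i ≠ j ∧ s(i, j) ≠ s(2, 3) := by
  simp [K4minusE]

instance : DecidableRel K4minusE.Adj := fun _ _ => decidable_of_iff' _ K4minusE_adj

theorem isGreatest_wormFeasible_top_fin_one :
    IsGreatest (wormFeasible (⊤ : SimpleGraph (Fin 1))) 1 := by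
  refine ⟨⟨fun _ => 0, ?_, rfl⟩, ?_⟩
  · simp only [IsWormColoring]; decide
  · rintro _ ⟨c, -, rfl⟩
    exact Finset.card_image_le.trans_eq (Finset.card_fin 1)

theorem isGreatest_wormFeasible_top_fin_three :
    IsGreatest (wormFeasible (⊤ : SimpleGraph (Fin 3))) 2 := by
  refine ⟨⟨![0, 0, 1], ?_, rfl⟩, ?_⟩
  · simp only [IsWormColoring]; decide
  · rintro _ ⟨c, hc, rfl⟩
    rw [colorsUsed, image_univ_fin_three, hc 0 1 2 (by decide) (by decide) (by decide)]

theorem isGreatest_wormFeasible_K4minusE : IsGreatest (wormFeasible K4minusE) 3 := by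
  refine ⟨⟨![0, 0, 1, 2], ?_, rfl⟩, ?_⟩
  · simp only [IsWormColoring]; decide
  · rintro _ ⟨c, hc, rfl⟩
    have h012 := hc 0 1 2 (by decide) (by decide) (by decide)
    rw [colorsUsed, image_univ_fin_four]
    exact (Finset.card_insert_le _ _).trans (by rw [h012])

theorem isGreatest_wormFeasible_top_fin_four :
    IsGreatest (wormFeasible (⊤ : SimpleGraph (Fin 4))) 2 := by
  refine ⟨⟨![0, 0, 1, 1], ?_, rfl⟩, ?_⟩
  · simp only [IsWormColoring]; decide
  · rintro _ ⟨c, hc, rfl⟩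
    have h3 := hc.mem_of_adj_triangle (u := 0) (v := 1) (w := 2) (x := 3)
      (by decide) (by decide) (by decide) (by decide) (by decide) (by decide)
    rw [colorsUsed, image_univ_fin_four, Finset.insert_eq_of_mem h3,
      hc 0 1 2 (by decide) (by decide) (by decide)]

end Models

section Iso

variable {V : Type*} {H : SimpleGraph V}

theorem SimpleGraph.IsNClique.nonempty_induce_iso_top {k : ℕ} {s : Finset V}
    (hs : H.IsNClique k s) :
    Nonempty (H.induce (s : Set V) ≃g (⊤ : SimpleGraph (Fin k))) := by
  rw [H.induce_eq_top.mpr hs.isClique]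
  exact ⟨Iso.completeGraph (Finset.equivFinOfCardEq hs.card_eq)⟩

theorem nonempty_induce_iso_K4minusE {p q r x : V} (hpq : H.Adj p q) (hpr : H.Adj p r)
    (hqr : H.Adj q r) (hpx : H.Adj p x) (hqx : H.Adj q x) (hrx : ¬H.Adj r x) (hne : r ≠ x) :
    Nonempty (H.induce ({p, q, r, x} : Set V) ≃g K4minusE) := by
  have hxr : ¬H.Adj x r := fun h => hrx h.symm
  have adj_iff (i j : Fin 4) : H.Adj (![p, q, r, x] i) (![p, q, r, x] j) ↔ K4minusE.Adj i j := by
    fin_cases i <;> fin_cases j <;>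
      simp [hpq, hpr, hqr, hpx, hqx, hrx, hpq.symm, hpr.symm, hqr.symm, hpx.symm, hqx.symm,
        hxr] <;> decide
  let f : K4minusE ↪g H :=
    ⟨⟨![p, q, r, x], fun i j hij => by
      fin_cases i <;> fin_cases j <;>
        simp_all [hpq.ne, hpr.ne, hqr.ne, hpx.ne, hqx.ne, hpq.ne', hpr.ne', hqr.ne', hpx.ne',
          hqx.ne', hne.symm]⟩, adj_iff _ _⟩
  have hrange : Set.range ![p, q, r, x] = {p, q, r, x} := by
    ext; simp; tauto
  rw [← hrange]
  exact ⟨f.isoInduceRange.symm⟩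

end Iso

theorem SimpleGraph.Reachable.mem_of_adj_closed {V : Type*} {H : SimpleGraph V} {s : Set V}
    (hs : ∀ a ∈ s, ∀ b, H.Adj a b → b ∈ s) {u v : V} (huv : H.Reachable u v) (hu : u ∈ s) :
    v ∈ s := by
  obtain ⟨p⟩ := huv
  induction p with
  | nil => exact hu
  | cons h _ ih => exact ih (hs _ hu _ h)

theorem SimpleGraph.ConnectedComponent.supp_eq_of_adj_closed {V : Type*} {H : SimpleGraph V}
    {s : Set V} {v : V} (hv : v ∈ s) (hs : ∀ a ∈ s, ∀ b, H.Adj a b → b ∈ s)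
    (hreach : ∀ a ∈ s, H.Reachable v a) : (H.connectedComponentMk v).supp = s := by
  ext a
  refine ⟨fun ha => (ConnectedComponent.exact ha).symm.mem_of_adj_closed hs hv,
    fun ha => ConnectedComponent.sound (hreach a ha).symm⟩

section MaxDegreeThree

variable {V : Type*} {G : SimpleGraph V}

/-- Also covers `K₄`: the tips `r` and `x` may be adjacent. -/
def IsDiamond (G : SimpleGraph V) (p q r x : V) : Prop :=
  G.Adj p q ∧ G.Adj p r ∧ G.Adj q r ∧ G.Adj p x ∧ G.Adj q x ∧ r ≠ x

theorem IsDiamond.swap {p q r x : V} (h : IsDiamond G p q r x) : IsDiamond G p q x r :=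
  let ⟨hpq, hpr, hqr, hpx, hqx, hrx⟩ := h
  ⟨hpq, hpx, hqx, hpr, hqr, hrx.symm⟩

variable [G.LocallyFinite]

theorem eq_or_eq_or_eq_of_adj_of_degree_le_three {v a b c d : V} (hv : G.degree v ≤ 3)
    (hab : a ≠ b) (hac : a ≠ c) (hbc : b ≠ c)
    (ha : G.Adj v a) (hb : G.Adj v b) (hc : G.Adj v c) (hd : G.Adj v d) :
    d = a ∨ d = b ∨ d = c := by
  classical
  by_contra! hd'
  obtain ⟨hda, hdb, hdc⟩ := hd'
  have hsub : ({d, a, b, c} : Finset V) ⊆ G.neighborFinset v := by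
    intro y hy
    simp only [Finset.mem_insert, Finset.mem_singleton] at hy
    rcases hy with rfl | rfl | rfl | rfl <;> simpa
  have := Finset.card_le_card hsub
  rw [card_neighborFinset_eq_degree, Finset.card_insert_of_notMem (by simp [hda, hdb, hdc]),
    Finset.card_insert_of_notMem (by simp [hab, hac]), Finset.card_pair hbc] at this
  omega

theorem exists_isDiamond_of_triangleEdgeSubgraph_adj {u v w x : V} (hu : G.degree u ≤ 3)
    (huv : G.Adj u v) (huw : G.Adj u w) (hvw : G.Adj v w) (hxv : x ≠ v) (hxw : x ≠ w)
    (hux : (triangleEdgeSubgraph G).Adj u x) : ∃ q r, IsDiamond G u q r x := by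
  obtain ⟨hux, y, huy, hxy⟩ := hux
  rcases eq_or_eq_or_eq_of_adj_of_degree_le_three hu hvw.ne hxv.symm hxw.symm huv huw hux huy
    with rfl | rfl | rfl
  · exact ⟨y, w, huv, huw, hvw, hux, hxy.symm, hxw.symm⟩
  · exact ⟨y, v, huw, huv, hvw.symm, hux, hxy.symm, hxv.symm⟩
  · exact absurd hxy (G.loopless.irrefl _)

theorem IsDiamond.eq_of_adj_left {p q r x b : V} (h : IsDiamond G p q r x)
    (hp : G.degree p ≤ 3) (hb : G.Adj p b) : b = q ∨ b = r ∨ b = x :=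
  let ⟨hpq, hpr, hqr, hpx, hqx, hrx⟩ := h
  eq_or_eq_or_eq_of_adj_of_degree_le_three hp hqr.ne hqx.ne hrx hpq hpr hpx hb

theorem IsDiamond.eq_of_adj_right {p q r x b : V} (h : IsDiamond G p q r x)
    (hq : G.degree q ≤ 3) (hb : G.Adj q b) : b = p ∨ b = r ∨ b = x :=
  let ⟨hpq, hpr, hqr, hpx, hqx, hrx⟩ := h
  eq_or_eq_or_eq_of_adj_of_degree_le_three hq hpr.ne hpx.ne hrx hpq.symm hqr hqx hb

theorem IsDiamond.eq_of_triangleEdgeSubgraph_adj_tip (hdeg : ∀ v, G.degree v ≤ 3)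
    {p q r x b : V} (h : IsDiamond G p q r x) (hb : (triangleEdgeSubgraph G).Adj r b) :
    b = p ∨ b = q ∨ b = x := by
  obtain ⟨hpq, hpr, hqr, -⟩ := id h
  by_contra! hb'
  obtain ⟨hbp, hbq, hbx⟩ := hb'
  obtain ⟨hrb, y, hry, hby⟩ := hb
  -- the third vertex `y` of a triangle on `r b` is `p` or `q`, all of whose neighbours are known
  rcases eq_or_eq_or_eq_of_adj_of_degree_le_three (hdeg r) hpq.ne hbp.symm hbq.symm
      hpr.symm hqr.symm hrb hry with rfl | rfl | rfl
  · have := h.eq_of_adj_left (hdeg _) hby.symm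
    have := hrb.ne'
    tauto
  · have := h.eq_of_adj_right (hdeg _) hby.symm
    have := hrb.ne'
    tauto
  · exact hby.ne rfl

theorem IsDiamond.nonempty_component_iso (hdeg : ∀ v, G.degree v ≤ 3) {p q r x : V}
    (h : IsDiamond G p q r x) :
    Nonempty ((triangleEdgeSubgraph G).induce
        ((triangleEdgeSubgraph G).connectedComponentMk p).supp ≃g K4minusE) ∨
      Nonempty ((triangleEdgeSubgraph G).induce
        ((triangleEdgeSubgraph G).connectedComponentMk p).supp ≃g (⊤ : SimpleGraph (Fin 4))) := by
  classical
  obtain ⟨hpq, hpr, hqr, hpx, hqx, hrx⟩ := id h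
  set H := triangleEdgeSubgraph G
  have Hpq : H.Adj p q := ⟨hpq, r, hpr, hqr⟩
  have Hpr : H.Adj p r := ⟨hpr, q, hpq, hqr.symm⟩
  have Hqr : H.Adj q r := ⟨hqr, p, hpq.symm, hpr.symm⟩
  have Hpx : H.Adj p x := ⟨hpx, q, hpq, hqx.symm⟩
  have Hqx : H.Adj q x := ⟨hqx, p, hpq.symm, hpx.symm⟩
  have hsupp : (H.connectedComponentMk p).supp = {p, q, r, x} := by
    refine ConnectedComponent.supp_eq_of_adj_closed (by simp) ?_ ?_
    · intro a ha b hb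
      simp only [Set.mem_insert_iff, Set.mem_singleton_iff] at ha ⊢
      rcases ha with rfl | rfl | rfl | rfl
      · have := h.eq_of_adj_left (hdeg _) hb.1; tauto
      · have := h.eq_of_adj_right (hdeg _) hb.1; tauto
      · have := h.eq_of_triangleEdgeSubgraph_adj_tip hdeg hb; tauto
      · have := h.swap.eq_of_triangleEdgeSubgraph_adj_tip hdeg hb; tauto
    · intro a ha
      simp only [Set.mem_insert_iff, Set.mem_singleton_iff] at ha
      rcases ha with rfl | rfl | rfl | rfl
      exacts [Reachable.refl _, Hpq.reachable, Hpr.reachable, Hpx.reachable]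
  rw [hsupp]
  by_cases hrx' : G.Adj r x
  · right
    have Hrx : H.Adj r x := ⟨hrx', p, hpr.symm, hpx.symm⟩
    have hK4 : H.IsNClique 4 {p, q, r, x} :=
      (is3Clique_triple_iff.mpr ⟨Hqr, Hqx, Hrx⟩).insert (by simp [Hpq, Hpr, Hpx])
    rw [show ({p, q, r, x} : Set V) = ({p, q, r, x} : Finset V) by simp]
    exact hK4.nonempty_induce_iso_top
  · left
    exact nonempty_induce_iso_K4minusE Hpq Hpr Hqr Hpx Hqx (fun h => hrx' h.1) hrx

theorem nonempty_triangleEdgeSubgraph_component_iso (hdeg : ∀ v, G.degree v ≤ 3)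
    (C : (triangleEdgeSubgraph G).ConnectedComponent) :
    Nonempty ((triangleEdgeSubgraph G).induce C.supp ≃g (⊤ : SimpleGraph (Fin 1))) ∨
      Nonempty ((triangleEdgeSubgraph G).induce C.supp ≃g (⊤ : SimpleGraph (Fin 3))) ∨
      Nonempty ((triangleEdgeSubgraph G).induce C.supp ≃g K4minusE) ∨
      Nonempty ((triangleEdgeSubgraph G).induce C.supp ≃g (⊤ : SimpleGraph (Fin 4))) := by
  classical
  refine C.ind fun v => ?_
  set H := triangleEdgeSubgraph G
  by_cases hv : ∀ b, ¬H.Adj v b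
  · left
    rw [ConnectedComponent.supp_eq_of_adj_closed (s := {v}) rfl
      (by rintro a rfl b hb; exact (hv b hb).elim) (by rintro a rfl; rfl)]
    rw [← Finset.coe_singleton]
    exact (isNClique_singleton.mpr rfl : H.IsNClique 1 {v}).nonempty_induce_iso_top
  push Not at hv
  obtain ⟨u, hvu, w, hvw, huw⟩ := hv
  have Hvu : H.Adj v u := ⟨hvu, w, hvw, huw⟩
  have Hvw : H.Adj v w := ⟨hvw, u, hvu, huw.symm⟩
  have Huw : H.Adj u w := ⟨huw, v, hvu.symm, hvw.symm⟩
  have hreach : ∀ a ∈ ({v, u, w} : Set V), H.Reachable v a := by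
    intro a ha
    simp only [Set.mem_insert_iff, Set.mem_singleton_iff] at ha
    rcases ha with rfl | rfl | rfl
    exacts [Reachable.refl _, Hvu.reachable, Hvw.reachable]
  by_cases hclosed : ∀ a ∈ ({v, u, w} : Set V), ∀ b, H.Adj a b → b ∈ ({v, u, w} : Set V)
  · right; left
    rw [ConnectedComponent.supp_eq_of_adj_closed (by simp) hclosed hreach]
    rw [show ({v, u, w} : Set V) = ({v, u, w} : Finset V) by simp]
    exact (is3Clique_triple_iff.mpr ⟨Hvu, Hvw, Huw⟩).nonempty_induce_iso_top
  right; right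
  push Not at hclosed
  obtain ⟨a, ha, x, hax, hx⟩ := hclosed
  simp only [Set.mem_insert_iff, Set.mem_singleton_iff, not_or] at hx
  obtain ⟨hxv, hxu, hxw⟩ := hx
  obtain ⟨q, r, hD⟩ : ∃ q r, IsDiamond G a q r x := by
    simp only [Set.mem_insert_iff, Set.mem_singleton_iff] at ha
    rcases ha with rfl | rfl | rfl
    · exact exists_isDiamond_of_triangleEdgeSubgraph_adj (hdeg a) hvu hvw huw hxu hxw hax
    · exact exists_isDiamond_of_triangleEdgeSubgraph_adj (hdeg a) hvu.symm huw hvw hxv hxw hax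
    · exact exists_isDiamond_of_triangleEdgeSubgraph_adj (hdeg a) hvw.symm huw.symm hvu hxv hxu hax
  rw [ConnectedComponent.sound (hreach a ha)]
  exact hD.nonempty_component_iso hdeg

end MaxDegreeThree

section Deficit

variable {W : Type*} {X : SimpleGraph W}

theorem isEmpty_K4minusE_iso_top : IsEmpty (K4minusE ≃g (⊤ : SimpleGraph (Fin 4))) :=
  ⟨fun e => absurd (e.map_adj_iff.mp (e.injective.ne (by decide : (2 : Fin 4) ≠ 3))) (by decide)⟩

theorem SimpleGraph.Iso.not_nonempty_iso_of_card_ne {β γ : Type*} [Fintype β] [Fintype γ]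
    {K : SimpleGraph β} {K' : SimpleGraph γ} (φ : X ≃g K) (h : Fintype.card β ≠ Fintype.card γ) :
    ¬Nonempty (X ≃g K') :=
  fun ⟨ψ⟩ => h (SimpleGraph.Iso.card_eq (φ.symm.trans ψ))

open Classical in
/-- `|W| − W⁺(X)` when `X` is `K₁`, `K₃`, `K₄ − e` or `K₄`. -/
noncomputable def wormDeficit (X : SimpleGraph W) : ℕ :=
  (if Nonempty (X ≃g (⊤ : SimpleGraph (Fin 3))) then 1 else 0) +
    (if Nonempty (X ≃g K4minusE) then 1 else 0) +
    2 * (if Nonempty (X ≃g (⊤ : SimpleGraph (Fin 4))) then 1 else 0)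

theorem exists_isGreatest_wormFeasible_add_wormDeficit [Fintype W]
    (hX : Nonempty (X ≃g (⊤ : SimpleGraph (Fin 1))) ∨ Nonempty (X ≃g (⊤ : SimpleGraph (Fin 3))) ∨
      Nonempty (X ≃g K4minusE) ∨ Nonempty (X ≃g (⊤ : SimpleGraph (Fin 4)))) :
    ∃ w, IsGreatest (wormFeasible X) w ∧ w + wormDeficit X = Nat.card W := by
  rcases hX with ⟨⟨φ⟩⟩ | ⟨⟨φ⟩⟩ | ⟨⟨φ⟩⟩ | ⟨⟨φ⟩⟩
  · refine ⟨1, wormFeasible_eq_of_iso φ ▸ isGreatest_wormFeasible_top_fin_one, ?_⟩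
    simp [wormDeficit, Nat.card_eq_fintype_card, φ.card_eq, φ.not_nonempty_iso_of_card_ne]
  · refine ⟨2, wormFeasible_eq_of_iso φ ▸ isGreatest_wormFeasible_top_fin_three, ?_⟩
    simp [wormDeficit, Nat.card_eq_fintype_card, φ.card_eq, φ.not_nonempty_iso_of_card_ne,
      Nonempty.intro φ]
  · refine ⟨3, wormFeasible_eq_of_iso φ ▸ isGreatest_wormFeasible_K4minusE, ?_⟩
    have h4 : ¬Nonempty (X ≃g (⊤ : SimpleGraph (Fin 4))) :=
      fun ⟨ψ⟩ => isEmpty_K4minusE_iso_top.false (φ.symm.trans ψ)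
    simp [wormDeficit, Nat.card_eq_fintype_card, φ.card_eq, φ.not_nonempty_iso_of_card_ne,
      Nonempty.intro φ, h4]
  · refine ⟨2, wormFeasible_eq_of_iso φ ▸ isGreatest_wormFeasible_top_fin_four, ?_⟩
    have h4e : ¬Nonempty (X ≃g K4minusE) :=
      fun ⟨ψ⟩ => isEmpty_K4minusE_iso_top.false (ψ.symm.trans φ)
    simp [wormDeficit, Nat.card_eq_fintype_card, φ.card_eq, φ.not_nonempty_iso_of_card_ne,
      Nonempty.intro φ, h4e]

end Deficit

theorem sum_wormDeficit {V : Type*} [Fintype V] [DecidableEq V] (H : SimpleGraph V)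
    [DecidableRel H.Adj] :
    ∑ C : H.ConnectedComponent, wormDeficit (H.induce C.supp) =
      compCount H (⊤ : SimpleGraph (Fin 3)) + compCount H K4minusE +
        2 * compCount H (⊤ : SimpleGraph (Fin 4)) := by
  classical
  simp only [wormDeficit, compCount, Finset.sum_add_distrib, ← Finset.mul_sum, Finset.sum_boole,
    Nat.card_eq_fintype_card, Fintype.card_subtype, Nat.cast_id]

theorem wormUpper_maxDegree_three_formula_general {V : Type*} [Fintype V]
    (G : SimpleGraph V) [DecidableRel G.Adj] (hdeg : ∀ v : V, G.degree v ≤ 3) :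
    (∀ C : (triangleEdgeSubgraph G).ConnectedComponent,
        Nonempty ((triangleEdgeSubgraph G).induce C.supp ≃g (⊤ : SimpleGraph (Fin 1))) ∨
        Nonempty ((triangleEdgeSubgraph G).induce C.supp ≃g (⊤ : SimpleGraph (Fin 3))) ∨
        Nonempty ((triangleEdgeSubgraph G).induce C.supp ≃g K4minusE) ∨
        Nonempty ((triangleEdgeSubgraph G).induce C.supp ≃g (⊤ : SimpleGraph (Fin 4)))) ∧
    IsGreatest (wormFeasible G)
      (Fintype.card V - compCount (triangleEdgeSubgraph G) (⊤ : SimpleGraph (Fin 3))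
        - compCount (triangleEdgeSubgraph G) K4minusE
        - 2 * compCount (triangleEdgeSubgraph G) (⊤ : SimpleGraph (Fin 4))) := by
  classical
  have hcomp := nonempty_triangleEdgeSubgraph_component_iso hdeg
  refine ⟨hcomp, ?_⟩
  choose w hw hwd using fun C => exists_isGreatest_wormFeasible_add_wormDeficit (hcomp C)
  have hcount : ∑ C, w C + ∑ C : (triangleEdgeSubgraph G).ConnectedComponent,
      wormDeficit ((triangleEdgeSubgraph G).induce C.supp) = Fintype.card V := by
    rw [← Finset.sum_add_distrib, ← sum_natCard_supp (H := triangleEdgeSubgraph G)]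
    exact Finset.sum_congr rfl fun C _ => hwd C
  rw [sum_wormDeficit] at hcount
  rw [← wormFeasible_triangleEdgeSubgraph, show Fintype.card V - _ - _ - _ = ∑ C, w C by omega]
  exact isGreatest_wormFeasible_of_components w hw

/-- If `G` has `n` vertices and maximum degree at most 3, then every connected
component of `G^Δ` is isomorphic to `K₁`, `K₃`, `K₄ − e` or `K₄`, and
`W⁺(G) = n − n₃ − n₄₋ₑ − 2·n₄` where `n₃`, `n₄₋ₑ`, `n₄` count the components of
`G^Δ` isomorphic to `K₃`, `K₄ − e`, `K₄` respectively. -/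
theorem wormUpper_maxDegree_three_formula {V : Type*} [Fintype V] [DecidableEq V]
    (G : SimpleGraph V) [DecidableRel G.Adj] (hdeg : ∀ v : V, G.degree v ≤ 3) :
    (∀ C : (triangleEdgeSubgraph G).ConnectedComponent,
        Nonempty ((triangleEdgeSubgraph G).induce C.supp ≃g (⊤ : SimpleGraph (Fin 1))) ∨
        Nonempty ((triangleEdgeSubgraph G).induce C.supp ≃g (⊤ : SimpleGraph (Fin 3))) ∨
        Nonempty ((triangleEdgeSubgraph G).induce C.supp ≃g K4minusE) ∨
        Nonempty ((triangleEdgeSubgraph G).induce C.supp ≃g (⊤ : SimpleGraph (Fin 4)))) ∧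
    IsGreatest (wormFeasible G)
      (Fintype.card V - compCount (triangleEdgeSubgraph G) (⊤ : SimpleGraph (Fin 3))
        - compCount (triangleEdgeSubgraph G) K4minusE
        - 2 * compCount (triangleEdgeSubgraph G) (⊤ : SimpleGraph (Fin 4))) :=
  wormUpper_maxDegree_three_formula_general G hdeg
end
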